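/- With the setup of the previous lemma, for any configuration c and any finite interval I containing the extension of the interval domain of c, the norm of the column satisfies ‖U_A(·,c)‖ = ∏_{i∈I} ‖δ(c_{i+N})‖. -/

import Mathlib

/-!
Outside `I` every neighbourhood of `c` is quiescent, so the local factor there is the indicator
of `q`: the amplitude `U_A(d, c)` vanishes unless `d` is quiescent outside `I`, and such `d` are
exactly the arbitrary functions `I → Σ`. On them the amplitude is a product of independent
factors over `I`, so the sum of squared amplitudes factors as `∏_{i ∈ I} ∑_s |δ(c_{i+N})(s)|²`.
-/

namespace QuiescentConfig

variable {ι S : Type*} [DecidableEq ι] {q : S} {K : Finset ι}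

def extend (q : S) (K : Finset ι) (g : K → S) : {d : ι → S // {i | d i ≠ q}.Finite} :=
  ⟨fun i => if h : i ∈ K then g ⟨i, h⟩ else q,
    K.finite_toSet.subset fun i hi => by
      by_contra h
      exact hi (dif_neg h)⟩

theorem extend_apply_of_mem (g : K → S) (i : K) : (extend q K g).1 i = g i :=
  dif_pos i.2

theorem extend_apply_of_notMem (g : K → S) {i : ι} (hi : i ∉ K) : (extend q K g).1 i = q :=
  dif_neg hi

theorem extend_injective : Function.Injective (extend q K) := fun g₁ g₂ h => funext fun i => by
  simpa only [extend_apply_of_mem] using congrFun (congrArg Subtype.val h) i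

theorem mem_range_extend {d : {d : ι → S // {i | d i ≠ q}.Finite}}
    (hd : ∀ i ∉ K, d.1 i = q) : d ∈ Set.range (extend q K) := by
  refine ⟨fun i => d.1 i, Subtype.ext (funext fun i => ?_)⟩
  by_cases hi : i ∈ K
  · exact extend_apply_of_mem _ ⟨i, hi⟩
  · rw [extend_apply_of_notMem _ hi, hd i hi]

end QuiescentConfig

section LocalFactors

open QuiescentConfig

variable {ι S M : Type*} [DecidableEq ι] [DecidableEq S] [CommMonoidWithZero M]
  {q : S} {K : Finset ι} {f : ι → S → M}

theorem mulSupport_apply_subset (hf : ∀ i ∉ K, ∀ s, f i s = if s = q then 1 else 0)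
    (d : ι → S) : Function.mulSupport (fun i => f i (d i)) ⊆ ↑K ∪ {i | d i ≠ q} := by
  intro i hi
  by_contra h
  simp only [Set.mem_union, Finset.mem_coe, Set.mem_ofPred_eq, not_or, not_not] at h
  exact hi (by simp only [hf i h.1, h.2, if_true])

theorem finprod_apply_eq_zero (hf : ∀ i ∉ K, ∀ s, f i s = if s = q then 1 else 0)
    (d : {d : ι → S // {i | d i ≠ q}.Finite}) {i : ι} (hiK : i ∉ K) (hi : d.1 i ≠ q) :
    ∏ᶠ i, f i (d.1 i) = 0 :=
  finprod_eq_zero _ i (by simp only [hf i hiK, hi, if_false])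
    ((K.finite_toSet.union d.2).subset (mulSupport_apply_subset hf d.1))

theorem finprod_extend (hf : ∀ i ∉ K, ∀ s, f i s = if s = q then 1 else 0) (g : K → S) :
    ∏ᶠ i, f i ((extend q K g).1 i) = ∏ i : K, f i (g i) := by
  have hsupp : Function.mulSupport (fun i => f i ((extend q K g).1 i)) ⊆ K := fun i hi => by
    by_contra hiK
    exact hi (by simp only [hf i hiK, extend_apply_of_notMem g hiK, if_true])
  rw [finprod_eq_prod_of_mulSupport_subset _ hsupp, ← Finset.prod_coe_sort]
  simp only [extend_apply_of_mem]

end LocalFactors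

open QuiescentConfig in
theorem tsum_norm_finprod_sq {ι S 𝕜 : Type*} [DecidableEq ι] [Fintype S] [DecidableEq S]
    [NormedField 𝕜] {q : S} {K : Finset ι} {f : ι → S → 𝕜}
    (hf : ∀ i ∉ K, ∀ s, f i s = if s = q then 1 else 0) :
    ∑' d : {d : ι → S // {i | d i ≠ q}.Finite}, ‖∏ᶠ i, f i (d.1 i)‖ ^ 2
      = ∏ i ∈ K, ∑ s, ‖f i s‖ ^ 2 := by
  have hsupp : (Function.support fun d : {d : ι → S // {i | d i ≠ q}.Finite} =>
      ‖∏ᶠ i, f i (d.1 i)‖ ^ 2) ⊆ Set.range (extend q K) := fun d hd => by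
    refine mem_range_extend fun i hiK => ?_
    by_contra hi
    exact hd (by simp only [finprod_apply_eq_zero hf d hiK hi, norm_zero, sq, mul_zero])
  rw [← extend_injective.tsum_eq hsupp, tsum_fintype, ← Finset.prod_coe_sort, Fintype.prod_sum]
  simp only [finprod_extend hf, norm_prod, Finset.prod_pow]

theorem column_norm_eq_prod_general {S : Type*} [Fintype S] [DecidableEq S]
    (q : S) {r : ℕ} (N : Fin r → ℤ)
    (δ : (Fin r → S) → EuclideanSpace ℂ S)
    (hq : ∀ x, δ (fun _ => q) x = if x = q then 1 else 0)
    (c : {c : ℤ → S // {i | c i ≠ q}.Finite}) (a b : ℤ)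
    (hI : ∀ i : ℤ, i ∉ Finset.Icc a b → ∀ j, c.1 (i + N j) = q) :
    Real.sqrt (∑' d : {c : ℤ → S // {i | c i ≠ q}.Finite},
        ‖∏ᶠ i : ℤ, δ (fun j => c.1 (i + N j)) (d.1 i)‖ ^ 2)
      = ∏ i ∈ Finset.Icc a b, ‖δ fun j => c.1 (i + N j)‖ := by
  have hquiescent : ∀ i ∉ Finset.Icc a b, ∀ s,
      δ (fun j => c.1 (i + N j)) s = if s = q then 1 else 0 := fun i hi s => by
    rw [show (fun j => c.1 (i + N j)) = fun _ => q from funext (hI i hi), hq]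
  rw [tsum_norm_finprod_sq hquiescent]
  simp only [← EuclideanSpace.norm_sq_eq, Finset.prod_pow]
  exact Real.sqrt_sq (by positivity)

/-- Corollary: the `ℓ²` norm of a column of the time evolution operator of an
LQCA equals the finite product of the norms of the local images, over any
finite interval `I = [a,b]` outside of which the configuration `c` has
quiescent neighborhoods (in particular any interval containing the extension
of the interval domain of `c`). -/
theorem column_norm_eq_prod {S : Type*} [Fintype S] [DecidableEq S]
    (q : S) {r : ℕ} (hr : 1 ≤ r) (N : Fin r → ℤ) (hN : StrictMono N)
    (δ : (Fin r → S) → EuclideanSpace ℂ S)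
    (hq : ∀ x, δ (fun _ => q) x = if x = q then 1 else 0)
    (c : {c : ℤ → S // {i | c i ≠ q}.Finite}) (a b : ℤ)
    (hI : ∀ i : ℤ, i ∉ Finset.Icc a b → ∀ j, c.1 (i + N j) = q) :
    Real.sqrt (∑' d : {c : ℤ → S // {i | c i ≠ q}.Finite},
        ‖∏ᶠ i : ℤ, δ (fun j => c.1 (i + N j)) (d.1 i)‖ ^ 2)
      = ∏ i ∈ Finset.Icc a b, ‖δ fun j => c.1 (i + N j)‖ :=
  column_norm_eq_prod_general q N δ hq c a b hI
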